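/- arXiv:math/0306413 — 3 statements merged into one kernel-verified Lean document; each statement's English description precedes it below -/
import Mathlib

section
/- Let F = ℂ(x, z) be the field of rational functions in two variables over ℂ, let A ⊆ F be the ℂ-subalgebra generated by x, z, z⁻¹ and x/(z − z⁻¹), and let σ be the ℂ-algebra automorphism of F determined by σ(x) = −x, σ(z) = z⁻¹ (which preserves A). Let φ : ℂ[a, t] → F be the ℂ-algebra homomorphism with φ(a) = z + z⁻¹ and φ(t) = x/(z − z⁻¹). Then φ is injective and its image equals the fixed subalgebra A^σ = {f ∈ A : σ(f) = f}. -/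
/-!
Write `a = z + z⁻¹` and `t = x / (z - z⁻¹)` for the images of the variables.

Injectivity: `x, z` is a transcendence basis of `F`, and `F` is algebraic over `ℂ[a, t]` because
`z² - a z + 1 = 0` and `x = t (z - z⁻¹)`; two elements over which a field of transcendence
degree two is algebraic are algebraically independent.

Image: since `z⁻¹ = a - z` and `z² = a z - 1`, every element of `A = ℂ[z, z⁻¹, t]` can be
written as `p + q z` with `p, q ∈ ℂ[a, t]`. Such an element is `σ`-fixed iff
`q (z - z⁻¹) = 0`, i.e. iff `q = 0`.
-/

open MvPolynomial Algebra

section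

variable {K F : Type*} [CommRing K] [Field F] [Algebra K F]

theorem isIntegral_of_add_inv_mem {S : Subalgebra K F} {z : F} (hz : z ≠ 0)
    (ha : z + z⁻¹ ∈ S) : IsIntegral S z := by
  refine ⟨.X ^ 2 + (1 - .C ⟨_, ha⟩ * .X), Polynomial.monic_X_pow_add ?_, ?_⟩
  · compute_degree!
  · simp only [Polynomial.eval₂_add, Polynomial.eval₂_X_pow, Polynomial.eval₂_sub,
      Polynomial.eval₂_one, Polynomial.eval₂_mul, Polynomial.eval₂_C,
      Subalgebra.algebraMap_apply, Polynomial.eval₂_X]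
    field_simp
    ring

theorem exists_eq_add_mul_of_mem_adjoin_insert_inv {z : F} (hz : z ≠ 0) {s : Set F} {f : F}
    (hf : f ∈ adjoin K (insert z (insert z⁻¹ s))) :
    ∃ p ∈ adjoin K (insert (z + z⁻¹) s), ∃ q ∈ adjoin K (insert (z + z⁻¹) s),
      f = p + q * z := by
  set B := adjoin K (insert (z + z⁻¹) s)
  have ha : z + z⁻¹ ∈ B := subset_adjoin (Set.mem_insert _ _)
  have hz2 : z * z = (z + z⁻¹) * z - 1 := by field_simp; ring
  induction hf using adjoin_induction with
  | mem y hy =>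
    rcases hy with rfl | rfl | hy
    · exact ⟨0, zero_mem B, 1, one_mem B, by ring⟩
    · exact ⟨_, ha, -1, neg_mem (one_mem B), by ring⟩
    · exact ⟨y, subset_adjoin (Set.mem_insert_of_mem _ hy), 0, zero_mem B, by ring⟩
  | algebraMap r => exact ⟨_, algebraMap_mem B r, 0, zero_mem B, by ring⟩
  | add f g _ _ hf hg =>
    obtain ⟨p, hp, q, hq, rfl⟩ := hf
    obtain ⟨p', hp', q', hq', rfl⟩ := hg
    exact ⟨p + p', add_mem hp hp', q + q', add_mem hq hq', by ring⟩
  | mul f g _ _ hf hg =>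
    obtain ⟨p, hp, q, hq, rfl⟩ := hf
    obtain ⟨p', hp', q', hq', rfl⟩ := hg
    exact ⟨p * p' - q * q', sub_mem (mul_mem hp hp') (mul_mem hq hq'),
      p * q' + q * p' + q * q' * (z + z⁻¹),
      add_mem (add_mem (mul_mem hp hq') (mul_mem hq hp')) (mul_mem (mul_mem hq hq') ha),
      by linear_combination q * q' * hz2⟩

theorem mem_adjoin_insert_add_inv_iff (σ : F ≃ₐ[K] F) {z : F} (hz : z - z⁻¹ ≠ 0)
    (hσz : σ z = z⁻¹) {s : Set F} (hσs : ∀ y ∈ s, σ y = y) {f : F} :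
    f ∈ adjoin K (insert (z + z⁻¹) s) ↔
      f ∈ adjoin K (insert z (insert z⁻¹ s)) ∧ σ f = f := by
  have hz0 : z ≠ 0 := by rintro rfl; simp at hz
  have hσB : ∀ p ∈ adjoin K (insert (z + z⁻¹) s), σ p = p := by
    refine fun p hp => AlgHom.adjoin_le_equalizer (σ : F →ₐ[K] F) (AlgHom.id K F) ?_ hp
    rintro y (rfl | hy)
    · simp [hσz, add_comm]
    · exact hσs y hy
  constructor
  · refine fun hf => ⟨adjoin_le ?_ hf, hσB f hf⟩
    rintro y (rfl | hy)
    · exact add_mem (subset_adjoin (by simp)) (subset_adjoin (by simp))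
    · exact subset_adjoin (by simp [hy])
  · rintro ⟨hf, hσf⟩
    obtain ⟨p, hp, q, hq, rfl⟩ := exists_eq_add_mul_of_mem_adjoin_insert_inv hz0 hf
    rw [map_add, map_mul, hσB p hp, hσB q hq, hσz] at hσf
    have hq0 : q = 0 :=
      (mul_eq_zero.mp (by linear_combination -hσf : q * (z - z⁻¹) = 0)).resolve_right hz
    simpa [hq0] using hp

theorem Transcendental.sub_inv_ne_zero [Nontrivial K] {z : F} (hz : Transcendental K z) :
    z - z⁻¹ ≠ 0 := by
  intro h
  refine hz ⟨.X ^ 2 - 1, fun h1 => ?_, ?_⟩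
  · simpa using congrArg (Polynomial.coeff · 0) h1
  · have hz0 : z ≠ 0 := by rintro rfl; exact hz isAlgebraic_zero
    have : z * (z - z⁻¹) = z ^ 2 - 1 := by field_simp
    simp [← this, h]

theorem IsTranscendenceBasis.add_inv_div_sub_inv [Nontrivial K] {x z : F}
    (h : IsTranscendenceBasis K ![x, z]) :
    IsTranscendenceBasis K ![z + z⁻¹, x / (z - z⁻¹)] := by
  have hzz : z - z⁻¹ ≠ 0 := (h.1.transcendental 1).sub_inv_ne_zero
  have hz0 : z ≠ 0 := by rintro rfl; simp at hzz
  set S := adjoin K (Set.range ![z + z⁻¹, x / (z - z⁻¹)])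
  have ha : z + z⁻¹ ∈ S := subset_adjoin ⟨0, rfl⟩
  have ht : x / (z - z⁻¹) ∈ S := subset_adjoin ⟨1, rfl⟩
  have hz : IsAlgebraic S z := (isIntegral_of_add_inv_mem hz0 ha).isAlgebraic
  have hx : IsAlgebraic S x := by
    rw [← div_mul_cancel₀ x hzz]
    exact (isAlgebraic_algebraMap (⟨_, ht⟩ : S)).mul (hz.sub hz.inv)
  have : FaithfulSMul K F :=
    (faithfulSMul_iff_algebraMap_injective K F).mpr h.1.algebraMap_injective
  have : Algebra.IsAlgebraic S F := h.isAlgebraic_iff.mpr (Fin.forall_fin_two.mpr ⟨hx, hz⟩)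
  exact Algebra.IsAlgebraic.isTranscendenceBasis_of_lift_le_trdeg_of_finite K _
    h.lift_cardinalMk_eq_trdeg.le

end

theorem isTranscendenceBasis_algebraMap_X {K : Type*} [CommRing K] [IsDomain K] (ι : Type*)
    (F : Type*) [Field F] [Algebra K F] [Algebra (MvPolynomial ι K) F]
    [IsScalarTower K (MvPolynomial ι K) F]
    [IsFractionRing (MvPolynomial ι K) F] :
    IsTranscendenceBasis K fun i => algebraMap (MvPolynomial ι K) F (X i) :=
  have := IsLocalization.isAlgebraic F (nonZeroDivisors (MvPolynomial ι K))
  (IsTranscendenceBasis.mvPolynomial ι K).algebraMap_comp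

/-- Let `F = ℂ(x, z)` be the field of rational functions in two
variables over `ℂ` (an abstract fraction field of `ℂ[x, z]`), let `A ⊆ F` be
the `ℂ`-subalgebra generated by `x, z, z⁻¹, x/(z − z⁻¹)`, and let `σ` be the
`ℂ`-algebra automorphism of `F` with `σ(x) = −x`, `σ(z) = z⁻¹`. Let
`φ : ℂ[a, t] → F` be the `ℂ`-algebra homomorphism sending `a ↦ z + z⁻¹` and
`t ↦ x/(z − z⁻¹)`. Then `φ` is injective and `im φ = A^σ`. -/
theorem coordinate_ring_ZGg_SL2
    (F : Type) [Field F] [Algebra ℂ F] [Algebra (MvPolynomial (Fin 2) ℂ) F]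
    [IsScalarTower ℂ (MvPolynomial (Fin 2) ℂ) F]
    [IsFractionRing (MvPolynomial (Fin 2) ℂ) F]
    (x z : F)
    (hx : x = algebraMap (MvPolynomial (Fin 2) ℂ) F (X 0))
    (hz : z = algebraMap (MvPolynomial (Fin 2) ℂ) F (X 1))
    (A : Subalgebra ℂ F)
    (hA : A = Algebra.adjoin ℂ ({x, z, z⁻¹, x / (z - z⁻¹)} : Set F))
    (σ : F ≃ₐ[ℂ] F) (hσx : σ x = -x) (hσz : σ z = z⁻¹)
    (φ : MvPolynomial (Fin 2) ℂ →ₐ[ℂ] F)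
    (hφ : φ = aeval ![z + z⁻¹, x / (z - z⁻¹)]) :
    Function.Injective φ ∧
    (φ.range : Set F) = {f : F | f ∈ A ∧ σ f = f} := by
  have hbasis : IsTranscendenceBasis ℂ ![x, z] := by
    have hxz : ![x, z] = fun i => algebraMap (MvPolynomial (Fin 2) ℂ) F (X i) := by
      ext i; fin_cases i <;> simp [hx, hz]
    exact hxz ▸ isTranscendenceBasis_algebraMap_X (Fin 2) F
  have hzz : z - z⁻¹ ≠ 0 := (hbasis.1.transcendental 1).sub_inv_ne_zero
  have hσt : σ (x / (z - z⁻¹)) = x / (z - z⁻¹) := by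
    simp only [map_div₀, map_sub, map_inv₀, hσx, hσz, inv_inv]
    rw [← neg_sub, div_neg, neg_div, neg_neg]
  have hA' : A = adjoin ℂ {z, z⁻¹, x / (z - z⁻¹)} := by
    refine hA.trans (adjoin_eq_of_le _ (Set.insert_subset ?_ subset_adjoin) (adjoin_mono
      (Set.subset_insert _ _)))
    have hx_mem : x / (z - z⁻¹) * (z - z⁻¹) ∈ adjoin ℂ {z, z⁻¹, x / (z - z⁻¹)} :=
      mul_mem (subset_adjoin (by simp))
        (sub_mem (subset_adjoin (by simp)) (subset_adjoin (by simp)))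
    rwa [div_mul_cancel₀ x hzz] at hx_mem
  have hrange : φ.range = adjoin ℂ {z + z⁻¹, x / (z - z⁻¹)} := by
    rw [hφ, ← adjoin_range_eq_range_aeval, Matrix.range_cons, Matrix.range_cons,
      Matrix.range_empty, Set.union_empty, Set.insert_eq]
  refine ⟨hφ ▸ hbasis.add_inv_div_sub_inv.1, Set.ext fun f => ?_⟩
  rw [SetLike.mem_coe, hrange, hA', mem_adjoin_insert_add_inv_iff σ hzz hσz (by simpa using hσt)]
  rfl
end

section
/- Let F = ℂ(u, x) be the field of rational functions in two variables over ℂ, let A ⊆ F be the ℂ-subalgebra generated by u, x and u/x, and let σ be the ℂ-algebra automorphism of F determined by σ(u) = −u, σ(x) = −x (which preserves A). Let φ : ℂ[d, θ] → F be the ℂ-algebra homomorphism with φ(d) = x² and φ(θ) = u/x. Then φ is injective and its image equals the fixed subalgebra A^σ = {f ∈ A : σ(f) = f}. -/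
open MvPolynomial

lemma my_funext (p : MvPolynomial (Fin 2) ℂ) (h : ∀ v : Fin 2 → ℂ, aeval v p = 0) : p = 0 := by
  apply MvPolynomial.funext (q := 0)
  intro v
  rw [← MvPolynomial.coe_aeval_eq_eval]
  simpa using h v

lemma r_inj : Function.Injective
    (bind₁ ![(X 1 : MvPolynomial (Fin 2) ℂ) ^ 2, X 0]) := by
  have h0 : ∀ p, bind₁ ![(X 1 : MvPolynomial (Fin 2) ℂ) ^ 2, X 0] p = 0 → p = 0 := by
    intro p hp
    apply my_funext
    intro w
    obtain ⟨s, hs⟩ := IsAlgClosed.exists_pow_nat_eq (w 0) (n := 2) two_pos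
    have h1 : aeval (![w 1, s] : Fin 2 → ℂ)
        (bind₁ ![(X 1 : MvPolynomial (Fin 2) ℂ) ^ 2, X 0] p) = 0 := by
      rw [hp, map_zero]
    rw [aeval_bind₁] at h1
    have h2 : (fun i => aeval (![w 1, s] : Fin 2 → ℂ)
        (![(X 1 : MvPolynomial (Fin 2) ℂ) ^ 2, X 0] i)) = w := by
      funext i
      fin_cases i <;> simp [hs]
    rwa [h2] at h1
  intro p q h
  exact sub_eq_zero.mp (h0 (p - q) (by rw [map_sub, h, sub_self]))

lemma e_inj : Function.Injective
    (bind₁ ![(X 0 : MvPolynomial (Fin 2) ℂ) * X 1, X 1]) := by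
  have h0 : ∀ p, bind₁ ![(X 0 : MvPolynomial (Fin 2) ℂ) * X 1, X 1] p = 0 → p = 0 := by
    intro p hp
    have key : p * X 1 = 0 := by
      apply my_funext
      intro w
      rw [map_mul]
      by_cases hw : w 1 = 0
      · simp [hw]
      · have h1 : aeval (![w 0 / w 1, w 1] : Fin 2 → ℂ)
            (bind₁ ![(X 0 : MvPolynomial (Fin 2) ℂ) * X 1, X 1] p) = 0 := by
          rw [hp, map_zero]
        rw [aeval_bind₁] at h1
        have h2 : (fun i => aeval (![w 0 / w 1, w 1] : Fin 2 → ℂ)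
            (![(X 0 : MvPolynomial (Fin 2) ℂ) * X 1, X 1] i)) = w := by
          funext i
          fin_cases i <;> simp [div_mul_cancel₀, hw]
        rw [h2] at h1
        simp [h1]
    rcases mul_eq_zero.mp key with h | h
    · exact h
    · exact absurd h (MvPolynomial.X_ne_zero 1)
  intro p q h
  exact sub_eq_zero.mp (h0 (p - q) (by rw [map_sub, h, sub_self]))

/-- Let `F = ℂ(u, x)` be the field of rational functions in two
variables over `ℂ` (an abstract fraction field of `ℂ[u, x]`), let `A ⊆ F` be
the `ℂ`-subalgebra generated by `u, x, u/x`, and let `σ` be the `ℂ`-algebra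
automorphism of `F` with `σ(u) = −u`, `σ(x) = −x`. Let `φ : ℂ[d, θ] → F` be
the `ℂ`-algebra homomorphism sending `d ↦ x²` and `θ ↦ u/x`. Then `φ` is
injective and `im φ = A^σ`. -/
theorem coordinate_ring_Zgg_SL2
    (F : Type) [Field F] [Algebra ℂ F] [Algebra (MvPolynomial (Fin 2) ℂ) F]
    [IsScalarTower ℂ (MvPolynomial (Fin 2) ℂ) F]
    [IsFractionRing (MvPolynomial (Fin 2) ℂ) F]
    (u x : F)
    (hu : u = algebraMap (MvPolynomial (Fin 2) ℂ) F (X 0))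
    (hx : x = algebraMap (MvPolynomial (Fin 2) ℂ) F (X 1))
    (A : Subalgebra ℂ F)
    (hA : A = Algebra.adjoin ℂ ({u, x, u / x} : Set F))
    (σ : F ≃ₐ[ℂ] F) (hσu : σ u = -u) (hσx : σ x = -x)
    (φ : MvPolynomial (Fin 2) ℂ →ₐ[ℂ] F)
    (hφ : φ = aeval ![x ^ 2, u / x]) :
    Function.Injective φ ∧
    (φ.range : Set F) = {f : F | f ∈ A ∧ σ f = f} := by
  have hι : Function.Injective (algebraMap (MvPolynomial (Fin 2) ℂ) F) :=
    IsFractionRing.injective _ _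
  have hx0 : x ≠ 0 := by
    rw [hx]
    intro h
    exact MvPolynomial.X_ne_zero 1 (hι (by rw [h, map_zero]))
  -- injectivity
  have hg : Function.Injective
      ((algebraMap (MvPolynomial (Fin 2) ℂ) F).comp
        (bind₁ ![(X 0 : MvPolynomial (Fin 2) ℂ) * X 1, X 1]).toRingHom) := hι.comp e_inj
  set L : F →+* F := IsFractionRing.lift hg with hL
  have hLι : ∀ q, L (algebraMap (MvPolynomial (Fin 2) ℂ) F q) =
      algebraMap (MvPolynomial (Fin 2) ℂ) F (bind₁ ![(X 0 : MvPolynomial (Fin 2) ℂ) * X 1, X 1] q) :=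
    fun q => IsFractionRing.lift_algebraMap hg q
  have hLx : L x = x := by rw [hx, hLι]; simp
  have hLu : L u = u * x := by
    rw [hu, hLι]
    simp [hu, hx]
  have hcomp : ∀ p, L (φ p) =
      algebraMap (MvPolynomial (Fin 2) ℂ) F (bind₁ ![(X 1 : MvPolynomial (Fin 2) ℂ) ^ 2, X 0] p) := by
    intro p
    have heq : L.comp φ.toRingHom =
        (algebraMap (MvPolynomial (Fin 2) ℂ) F).comp
          (bind₁ ![(X 1 : MvPolynomial (Fin 2) ℂ) ^ 2, X 0]).toRingHom := by
      apply MvPolynomial.ringHom_ext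
      · intro c
        have h1 : (algebraMap ℂ F) c =
            algebraMap (MvPolynomial (Fin 2) ℂ) F (C c) := by
          rw [IsScalarTower.algebraMap_apply ℂ (MvPolynomial (Fin 2) ℂ) F, MvPolynomial.algebraMap_eq]
        simp only [RingHom.coe_comp, Function.comp_apply, AlgHom.toRingHom_eq_coe,
          AlgHom.coe_toRingHom]
        rw [hφ]
        rw [aeval_C, h1, hLι]
        simp
      · intro i
        fin_cases i
        · show L (φ (X 0)) = algebraMap (MvPolynomial (Fin 2) ℂ) F
            (bind₁ ![(X 1 : MvPolynomial (Fin 2) ℂ) ^ 2, X 0] (X 0))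
          rw [hφ]
          simp only [aeval_X, Matrix.cons_val_zero, bind₁_X_right]
          rw [map_pow, hLx, map_pow, ← hx]
        · show L (φ (X 1)) = algebraMap (MvPolynomial (Fin 2) ℂ) F
            (bind₁ ![(X 1 : MvPolynomial (Fin 2) ℂ) ^ 2, X 0] (X 1))
          rw [hφ]
          simp only [aeval_X, Matrix.cons_val_one, Matrix.head_cons, Matrix.cons_val_zero, bind₁_X_right]
          rw [map_div₀, hLx, hLu, mul_div_assoc, div_self hx0, mul_one, hu]
    exact RingHom.congr_fun heq p
  have hinj : Function.Injective φ := by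
    intro p q h
    have h2 := congrArg L h
    rw [hcomp, hcomp] at h2
    exact r_inj (hι h2)
  refine ⟨hinj, ?_⟩
  -- range computation
  set ψ : MvPolynomial (Fin 3) ℂ →ₐ[ℂ] F := aeval ![u, x, u / x] with hψ
  have hArange : A = ψ.range := by
    rw [hA, ← Algebra.adjoin_range_eq_range_aeval]
    congr 1
    ext y
    simp [Matrix.range_cons, Matrix.range_empty]
    tauto
  set s : MvPolynomial (Fin 3) ℂ →ₐ[ℂ] MvPolynomial (Fin 3) ℂ :=
    bind₁ ![-X 0, -X 1, X 2] with hs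
  have hσψ : ∀ p, σ (ψ p) = ψ (s p) := by
    intro p
    have heq : (σ.toAlgHom.comp ψ) = ψ.comp s := by
      apply MvPolynomial.algHom_ext
      intro i
      fin_cases i <;>
        simp [hψ, hs, hσu, hσx, map_div₀, neg_div_neg_eq]
    exact congrFun (congrArg DFunLike.coe heq) p
  have hmemx2 : x ^ 2 ∈ φ.range := ⟨X 0, by rw [hφ]; simp⟩
  have hmemv : u / x ∈ φ.range := ⟨X 1, by rw [hφ]; simp⟩
  have key : ∀ p : MvPolynomial (Fin 3) ℂ,
      ψ p + ψ (s p) ∈ φ.range ∧ (ψ p - ψ (s p)) / x ∈ φ.range := by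
    intro p
    induction p using MvPolynomial.induction_on with
    | C a =>
        constructor
        · have h1 : ψ (C a) + ψ (s (C a)) = algebraMap ℂ F a + algebraMap ℂ F a := by
            simp [hs, hψ]
          rw [h1]
          exact add_mem (φ.range.algebraMap_mem a) (φ.range.algebraMap_mem a)
        · have h1 : (ψ (C a) - ψ (s (C a))) / x = 0 := by simp [hs, hψ]
          rw [h1]; exact zero_mem _
    | add p q hp hq =>
        constructor
        · have h1 : ψ (p + q) + ψ (s (p + q)) = (ψ p + ψ (s p)) + (ψ q + ψ (s q)) := by
            simp only [map_add]; ring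
          rw [h1]; exact add_mem hp.1 hq.1
        · have h1 : (ψ (p + q) - ψ (s (p + q))) / x
              = (ψ p - ψ (s p)) / x + (ψ q - ψ (s q)) / x := by
            simp only [map_add]; ring
          rw [h1]; exact add_mem hp.2 hq.2
    | mul_X p i hp =>
        have hsX : ∀ j : Fin 3, s (p * X j) = s p * s (X j) := fun j => map_mul s p (X j)
        fin_cases i
        · have e0 : ψ (X 0) = u := by simp [hψ]
          have e0' : ψ (s (X 0)) = -u := by simp [hs, hψ]
          refine ⟨?_, ?_⟩
          · show ψ (p * X 0) + ψ (s (p * X 0)) ∈ φ.range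
            have h1 : ψ (p * X 0) + ψ (s (p * X 0))
                = ((ψ p - ψ (s p)) / x) * (u / x) * x ^ 2 := by
              rw [map_mul, hsX, map_mul, e0, e0']
              field_simp
              ring
            rw [h1]
            exact mul_mem (mul_mem hp.2 hmemv) hmemx2
          · show (ψ (p * X 0) - ψ (s (p * X 0))) / x ∈ φ.range
            have h1 : (ψ (p * X 0) - ψ (s (p * X 0))) / x
                = (ψ p + ψ (s p)) * (u / x) := by
              rw [map_mul, hsX, map_mul, e0, e0']
              field_simp
              ring
            rw [h1]
            exact mul_mem hp.1 hmemv
        · have e0 : ψ (X 1) = x := by simp [hψ]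
          have e0' : ψ (s (X 1)) = -x := by simp [hs, hψ]
          refine ⟨?_, ?_⟩
          · show ψ (p * X 1) + ψ (s (p * X 1)) ∈ φ.range
            have h1 : ψ (p * X 1) + ψ (s (p * X 1))
                = ((ψ p - ψ (s p)) / x) * x ^ 2 := by
              rw [map_mul, hsX, map_mul, e0, e0']
              field_simp
              ring
            rw [h1]
            exact mul_mem hp.2 hmemx2
          · show (ψ (p * X 1) - ψ (s (p * X 1))) / x ∈ φ.range
            have h1 : (ψ (p * X 1) - ψ (s (p * X 1))) / x = ψ p + ψ (s p) := by
              rw [map_mul, hsX, map_mul, e0, e0']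
              field_simp
              ring
            rw [h1]
            exact hp.1
        · have e0 : ψ (X 2) = u / x := by simp [hψ]
          have e0' : ψ (s (X 2)) = u / x := by simp [hs, hψ]
          refine ⟨?_, ?_⟩
          · show ψ (p * X 2) + ψ (s (p * X 2)) ∈ φ.range
            have h1 : ψ (p * X 2) + ψ (s (p * X 2))
                = (ψ p + ψ (s p)) * (u / x) := by
              rw [map_mul, hsX, map_mul, e0, e0']
              ring
            rw [h1]
            exact mul_mem hp.1 hmemv
          · show (ψ (p * X 2) - ψ (s (p * X 2))) / x ∈ φ.range
            have h1 : (ψ (p * X 2) - ψ (s (p * X 2))) / x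
                = ((ψ p - ψ (s p)) / x) * (u / x) := by
              rw [map_mul, hsX, map_mul, e0, e0']
              field_simp
            rw [h1]
            exact mul_mem hp.2 hmemv
  ext f
  simp only [SetLike.mem_coe, Set.mem_setOf_eq]
  constructor
  · rintro ⟨p, rfl⟩
    constructor
    · have hle : φ.range ≤ A := by
        rw [hφ, ← Algebra.adjoin_range_eq_range_aeval]
        apply Algebra.adjoin_le
        intro y hy
        simp only [Matrix.range_cons, Matrix.range_empty, Set.union_empty,
          Set.mem_insert_iff, Set.mem_singleton_iff] at hy
        rcases hy with rfl | rfl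
        · rw [hA]
          exact pow_mem (Algebra.subset_adjoin (by simp)) 2
        · rw [hA]
          exact Algebra.subset_adjoin (by simp)
      exact hle ⟨p, rfl⟩
    · have heq : σ.toAlgHom.comp φ = φ := by
        apply MvPolynomial.algHom_ext
        intro i
        fin_cases i <;>
          simp [hφ, hσu, hσx, map_div₀, neg_div_neg_eq]
      exact congrFun (congrArg DFunLike.coe heq) p
  · rintro ⟨hfA, hf⟩
    rw [hArange] at hfA
    obtain ⟨p, hpf⟩ := hfA
    have hpf' : ψ p = f := hpf
    subst hpf'
    have h2 : ψ p + ψ (s p) = 2 * ψ p := by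
      rw [← hσψ, hf]; ring
    have hmem := (key p).1
    rw [h2] at hmem
    have h3 : ψ p = (2⁻¹ : ℂ) • (2 * ψ p) := by
      rw [Algebra.smul_def, ← mul_assoc]
      have : (algebraMap ℂ F) (2⁻¹ : ℂ) * 2 = 1 := by
        have h4 : ((2 : F)) = algebraMap ℂ F 2 := (map_ofNat (algebraMap ℂ F) 2).symm
        rw [h4, ← map_mul]
        norm_num
      rw [this, one_mul]
    rw [h3]
    exact φ.range.smul_mem hmem _
end

section
/- The quotient ring ℂ[a, b, c]/(abc − b² − c² − 1), regarded as an algebra over the polynomial ring ℂ[a] via a ↦ a, is a flat ℂ[a]-module. -/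
open MvPolynomial

/-- The ideal `(abc − b² − c² − 1) ⊂ ℂ[a, b, c]` cutting out the universal
centralizer `𝔷_G^G` for `G = SL₂`. -/
noncomputable def centralizerIdealGG : Ideal (MvPolynomial (Fin 3) ℂ) :=
  Ideal.span {X 0 * X 1 * X 2 - X 1 ^ 2 - X 2 ^ 2 - 1}

/-- `ℂ[a, b, c]/(abc − b² − c² − 1)` is a `ℂ[a]`-algebra via `a ↦ a`. -/
noncomputable instance : Algebra (Polynomial ℂ) (MvPolynomial (Fin 3) ℂ ⧸ centralizerIdealGG) :=
  ((Ideal.Quotient.mk centralizerIdealGG).comp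
    (Polynomial.aeval (X 0 : MvPolynomial (Fin 3) ℂ)).toRingHom).toAlgebra

namespace CentralizerAux

/-- permutation sending the variables `a, b, c` to slots `2, 0, 1`. -/
def σ : Fin 3 ≃ Fin 3 :=
  ⟨![2, 0, 1], ![1, 2, 0], by decide, by decide⟩

noncomputable abbrev Rr : Type := Polynomial (Polynomial ℂ)

noncomputable def E2 : MvPolynomial (Fin 1) ℂ ≃ₐ[ℂ] Polynomial ℂ :=
  (finSuccEquiv ℂ 0).trans <| Polynomial.mapAlgEquiv <| isEmptyAlgEquiv ℂ (Fin 0)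

noncomputable def E1 : MvPolynomial (Fin 2) ℂ ≃ₐ[ℂ] Rr :=
  (finSuccEquiv ℂ 1).trans <| Polynomial.mapAlgEquiv E2

/-- full variable-peeling equivalence `ℂ[a,b,c] ≃ (ℂ[a][c])[b]`. -/
noncomputable def E : MvPolynomial (Fin 3) ℂ ≃ₐ[ℂ] Polynomial Rr :=
  (renameEquiv ℂ σ).trans <| (finSuccEquiv ℂ 2).trans <| Polynomial.mapAlgEquiv E1

lemma E2_X0 : E2 (X 0) = Polynomial.X := by
  rw [E2, AlgEquiv.trans_apply, finSuccEquiv_X_zero]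
  simp [Polynomial.mapAlgEquiv]

lemma E1_X0 : E1 (X 0) = Polynomial.X := by
  rw [E1, AlgEquiv.trans_apply, finSuccEquiv_X_zero]
  simp [Polynomial.mapAlgEquiv]

lemma E1_X1 : E1 (X 1) = Polynomial.C Polynomial.X := by
  have h : (X 1 : MvPolynomial (Fin 2) ℂ) = X (Fin.succ 0) := by
    congr 1
  rw [E1, AlgEquiv.trans_apply, h, finSuccEquiv_X_succ]
  simp [Polynomial.mapAlgEquiv, E2_X0]

lemma E_X0 : E (X 0) = Polynomial.C (Polynomial.C Polynomial.X) := by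
  have h : (X (σ 0) : MvPolynomial (Fin 3) ℂ) = X (Fin.succ 1) := by
    congr 1
  rw [E, AlgEquiv.trans_apply, AlgEquiv.trans_apply, renameEquiv_apply, rename_X, h,
    finSuccEquiv_X_succ]
  simp [Polynomial.mapAlgEquiv, E1_X1]

lemma E_X1 : E (X 1) = Polynomial.X := by
  have h : (X (σ 1) : MvPolynomial (Fin 3) ℂ) = X 0 := by
    congr 1
  rw [E, AlgEquiv.trans_apply, AlgEquiv.trans_apply, renameEquiv_apply, rename_X, h,
    finSuccEquiv_X_zero]
  simp [Polynomial.mapAlgEquiv]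

lemma E_X2 : E (X 2) = Polynomial.C Polynomial.X := by
  have h : (X (σ 2) : MvPolynomial (Fin 3) ℂ) = X (Fin.succ 0) := by
    congr 1
  rw [E, AlgEquiv.trans_apply, AlgEquiv.trans_apply, renameEquiv_apply, rename_X, h,
    finSuccEquiv_X_succ]
  simp [Polynomial.mapAlgEquiv, E1_X0]

noncomputable def g : Polynomial Rr :=
  Polynomial.X ^ 2 - Polynomial.C (Polynomial.C Polynomial.X * Polynomial.X) * Polynomial.X
    + Polynomial.C (Polynomial.X ^ 2 + 1)

lemma hg : g.Monic := by
  unfold g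
  monicity!

lemma E_f : E (X 0 * X 1 * X 2 - X 1 ^ 2 - X 2 ^ 2 - 1) = -g := by
  rw [map_sub, map_sub, map_sub, map_mul, map_mul, map_pow, map_pow, map_one,
    E_X0, E_X1, E_X2, g]
  simp only [map_mul, map_add, map_pow, map_one]
  ring

lemma ideal_map : Ideal.span {g} = centralizerIdealGG.map (E : MvPolynomial (Fin 3) ℂ →+* Polynomial Rr) := by
  rw [centralizerIdealGG, Ideal.map_span, Set.image_singleton]
  rw [show ((E : MvPolynomial (Fin 3) ℂ →+* Polynomial Rr) (X 0 * X 1 * X 2 - X 1 ^ 2 - X 2 ^ 2 - 1)) = -g from E_f]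
  exact (Ideal.span_singleton_neg g).symm

end CentralizerAux

/-- `ℂ[a, b, c]/(abc − b² − c² − 1)` is flat as a `ℂ[a]`-module
(rank-one case of flatness of `ϖ : 𝔅_G^G → T/W`). -/
theorem flat_over_Ca_centralizerGG :
    Module.Flat (Polynomial ℂ) (MvPolynomial (Fin 3) ℂ ⧸ centralizerIdealGG) := by
  classical
  set A := Polynomial ℂ
  have freeR : Module.Free CentralizerAux.Rr (AdjoinRoot CentralizerAux.g) :=
    Module.Free.of_basis (AdjoinRoot.powerBasis' CentralizerAux.hg).basis
  have freeA : Module.Free A CentralizerAux.Rr :=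
    Module.Free.of_basis (Polynomial.basisMonomials A)
  have flatR : Module.Flat CentralizerAux.Rr (AdjoinRoot CentralizerAux.g) :=
    Module.Flat.of_free
  have flatA : Module.Flat A CentralizerAux.Rr := Module.Flat.of_free
  have flat2 : Module.Flat A (AdjoinRoot CentralizerAux.g) :=
    Module.Flat.trans A CentralizerAux.Rr (AdjoinRoot CentralizerAux.g)
  -- ring equivalence between the two quotients
  letI : CommRing (Polynomial CentralizerAux.Rr) := inferInstance
  let eRing : (MvPolynomial (Fin 3) ℂ ⧸ centralizerIdealGG) ≃+* AdjoinRoot CentralizerAux.g :=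
    Ideal.quotientEquiv centralizerIdealGG (Ideal.span {CentralizerAux.g})
      CentralizerAux.E.toRingEquiv CentralizerAux.ideal_map
  -- the equivalence is `A`-linear
  have key0 : ∀ p : A, Polynomial.aeval
      (Polynomial.C (Polynomial.C Polynomial.X) : Polynomial CentralizerAux.Rr) p
      = algebraMap A (Polynomial CentralizerAux.Rr) p := by
    intro p
    have h : (Polynomial.aeval
        (Polynomial.C (Polynomial.C Polynomial.X) : Polynomial CentralizerAux.Rr) :
          A →ₐ[ℂ] Polynomial CentralizerAux.Rr)
        = IsScalarTower.toAlgHom ℂ A (Polynomial CentralizerAux.Rr) := by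
      apply Polynomial.algHom_ext
      simp [Polynomial.algebraMap_apply]
      rfl
    exact DFunLike.congr_fun h p
  have key1 : ∀ p : A, eRing (algebraMap A _ p) = algebraMap A (AdjoinRoot CentralizerAux.g) p := by
    intro p
    have h2 : algebraMap A (MvPolynomial (Fin 3) ℂ ⧸ centralizerIdealGG) p
        = Ideal.Quotient.mk centralizerIdealGG (Polynomial.aeval (X 0) p) := rfl
    rw [h2]
    rw [show (eRing (Ideal.Quotient.mk centralizerIdealGG (Polynomial.aeval (X 0) p)))
        = Ideal.Quotient.mk (Ideal.span {CentralizerAux.g})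
          (CentralizerAux.E (Polynomial.aeval (X 0) p)) from rfl]
    rw [← Polynomial.aeval_algHom_apply CentralizerAux.E (X 0) p,
      CentralizerAux.E_X0, key0, AdjoinRoot.algebraMap_eq']
    rfl
  let e : (MvPolynomial (Fin 3) ℂ ⧸ centralizerIdealGG) ≃ₗ[A] AdjoinRoot CentralizerAux.g :=
    { eRing with
      map_add' := map_add eRing
      map_smul' := by
        intro p x
        simp only [RingHom.id_apply, RingEquiv.toEquiv_eq_coe, Equiv.toFun_as_coe,
          EquivLike.coe_coe]
        rw [Algebra.smul_def, Algebra.smul_def, map_mul, key1] }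
  exact Module.Flat.of_linearEquiv e
end
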